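/- Let S² = {s ∈ ℝ³ : |s| = 1} with its standard surface measure dσ. Let k : ℝ³ × [−1,1] → ℝ and σ_t : ℝ³ → ℝ be measurable, set σ_s(r) = ∫_{S²} k(r, s·s') dσ(s') and σ_a = σ_t − σ_s, and assume 0 ≤ k(r,μ) ≤ k̄ and 0 < σ̲_a ≤ σ_a(r) ≤ σ̄_a for all r, μ. Let K ⊆ ℝ³ be compact and q̂ : ℝ³ × S² → ℝ continuous, vanishing for r ∉ K. Let φ̂ : ℝ³ × S² → ℝ be continuous with continuous ∇_r φ̂, vanishing for r ∉ K, and satisfying the stationary equation s·∇_r φ̂(r,s) + σ_t(r) φ̂(r,s) = ∫_{S²} k(r, s·s') φ̂(r,s') dσ(s') + q̂(r,s) for all (r,s). Let φ : [0,T] × ℝ³ × S² → ℝ be continuous with continuous ∂_t φ and ∇_r φ, vanishing for r ∉ K, and satisfying ∂_t φ + s·∇_r φ + σ_t φ = ∫_{S²} k(r, s·s') φ(t,r,s') dσ(s') + q̂(r,s) for all (t,r,s). Then for all t ∈ [0,T]: ∫_{ℝ³×S²} |φ(t,r,s) − φ̂(r,s)|² dr dσ(s) ≤ e^{−σ̲_a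 t} ∫_{ℝ³×S²} |φ(0,r,s) − φ̂(r,s)|² dr dσ(s). -/

import Mathlib

open MeasureTheory
open scoped RealInnerProductSpace

noncomputable abbrev E3 : Type := EuclideanSpace ℝ (Fin 3)
abbrev Sph : Type := Metric.sphere (0 : E3) 1

/-- The standard surface measure on the unit sphere S² ⊂ ℝ³. -/
noncomputable def sphMeasure : Measure Sph := (volume : Measure E3).toSphere

/-!
The difference `ψ = φ - φ̂` solves the homogeneous equation
`∂ₜψ + s·∇ᵣψ + σₜψ = Kψ`, so `E(t) = ‖ψ(t)‖²` satisfies `E' = -2⟨ψ, s·∇ᵣψ + σₜψ - Kψ⟩`.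
For each direction `s` the streaming term `∫ ψ (s·∇ᵣψ) dr = ½ ∫ s·∇ᵣ(ψ²) dr` vanishes by
integration by parts (compact support). For each `r`, `2ψ(s)ψ(s') ≤ ψ(s)² + ψ(s')²` together
with the symmetry of `k(r, s·s')` in `s, s'` bounds the scattering term `⟨ψ, Kψ⟩` by
`σₛ ‖ψ‖²`. Hence `⟨ψ, s·∇ᵣψ + σₜψ - Kψ⟩ ≥ σ̲ₐ ‖ψ‖²`, i.e. `E' ≤ -2σ̲ₐ E`, and Grönwall gives
`E(t) ≤ e^{-2σ̲ₐ t} E(0) ≤ e^{-σ̲ₐ t} E(0)`.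
-/

open Set Function Filter Topology Real

section Integrals

variable {α : Type*} [MeasurableSpace α] {μ : Measure α}

theorem integrable_of_abs_le_of_notMem_eq_zero {S : Set α} (hS : μ S ≠ ⊤) {f : α → ℝ} {C : ℝ}
    (hf : AEStronglyMeasurable f μ) (hC : ∀ x, |f x| ≤ C) (h0 : ∀ x ∉ S, f x = 0) :
    Integrable f μ :=
  (Measure.integrableOn_of_bounded hS hf (ae_of_all _ hC)).integrable_of_forall_notMem_eq_zero h0

theorem integral_mul_integral_kernel_le [IsFiniteMeasure μ] {w : α → α → ℝ} {g : α → ℝ}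
    {σ C D : ℝ} (hw : Measurable (uncurry w)) (hw0 : ∀ x y, 0 ≤ w x y) (hwC : ∀ x y, w x y ≤ C)
    (hsymm : ∀ x y, w x y = w y x) (hrow : ∀ x, ∫ y, w x y ∂μ = σ)
    (hg : Measurable g) (hgD : ∀ x, |g x| ≤ D) :
    ∫ x, g x * ∫ y, w x y * g y ∂μ ∂μ ≤ σ * ∫ x, g x ^ 2 ∂μ := by
  have hwC' (q : α × α) : |w q.1 q.2| ≤ |C| :=
    (abs_of_nonneg (hw0 _ _)).trans_le ((hwC _ _).trans (le_abs_self C))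
  have hgD' (x : α) : |g x| ≤ |D| := (hgD x).trans (le_abs_self D)
  have hW : Integrable (fun q : α × α => w q.1 q.2 * g q.1 * g q.2) (μ.prod μ) := by
    refine Integrable.of_bound (C := |C| * |D| * |D|)
      ((hw.mul (hg.comp measurable_fst)).mul (hg.comp measurable_snd)).aestronglyMeasurable
      (ae_of_all _ fun q => ?_)
    simp only [norm_mul, Real.norm_eq_abs]
    exact mul_le_mul (mul_le_mul (hwC' q) (hgD' _) (abs_nonneg _) (abs_nonneg _)) (hgD' _)
      (abs_nonneg _) (by positivity)
  have hV : Integrable (fun q : α × α => w q.1 q.2 * g q.1 ^ 2) (μ.prod μ) := by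
    refine Integrable.of_bound (C := |C| * (|D| * |D|))
      (hw.mul ((hg.comp measurable_fst).pow_const 2)).aestronglyMeasurable
      (ae_of_all _ fun q => ?_)
    simp only [norm_mul, Real.norm_eq_abs, sq]
    exact mul_le_mul (hwC' q) (mul_le_mul (hgD' _) (hgD' _) (abs_nonneg _) (abs_nonneg _))
      (by positivity) (abs_nonneg _)
  have hV' : Integrable (fun q : α × α => w q.1 q.2 * g q.2 ^ 2) (μ.prod μ) := by
    convert hV.swap using 2 with q
    simp only [comp_apply, Prod.fst_swap, Prod.snd_swap, hsymm q.2 q.1]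
  have hrowsq : ∫ q : α × α, w q.1 q.2 * g q.1 ^ 2 ∂μ.prod μ = σ * ∫ x, g x ^ 2 ∂μ := by
    simp_rw [integral_prod _ hV, integral_mul_const, hrow, integral_const_mul]
  have hcolsq : ∫ q : α × α, w q.1 q.2 * g q.2 ^ 2 ∂μ.prod μ = σ * ∫ x, g x ^ 2 ∂μ := by
    rw [← hrowsq, ← integral_prod_swap]
    simp_rw [Prod.fst_swap, Prod.snd_swap, hsymm]
  calc ∫ x, g x * ∫ y, w x y * g y ∂μ ∂μ = ∫ q : α × α, w q.1 q.2 * g q.1 * g q.2 ∂μ.prod μ := by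
        rw [integral_prod _ hW]
        simp_rw [← integral_const_mul]
        congr with x; congr with y; ring
    _ ≤ ∫ q : α × α, (w q.1 q.2 * g q.1 ^ 2 + w q.1 q.2 * g q.2 ^ 2) / 2 ∂μ.prod μ := by
        refine integral_mono hW ((hV.add hV').div_const 2) fun q => ?_
        nlinarith [mul_nonneg (hw0 q.1 q.2) (sq_nonneg (g q.1 - g q.2))]
    _ = σ * ∫ x, g x ^ 2 ∂μ := by
        rw [integral_div, integral_add hV hV', hrowsq, hcolsq]
        ring

variable {S : Set α} {F : ℝ → α → ℝ} {C : ℝ}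

theorem continuousOn_integral_sq (hS : MeasurableSet S) (hμS : μ S ≠ ⊤) {I : Set ℝ}
    (hF : ∀ t ∈ I, AEStronglyMeasurable (F t) μ) (hC : ∀ t ∈ I, ∀ x, |F t x| ≤ C)
    (h0 : ∀ t, ∀ x ∉ S, F t x = 0) (hcont : ∀ x, ContinuousOn (F · x) I) :
    ContinuousOn (fun t => ∫ x, F t x ^ 2 ∂μ) I := by
  refine continuousOn_of_dominated (bound := S.indicator fun _ => C ^ 2)
    (fun t ht => (hF t ht).pow 2) (fun t ht => ae_of_all _ fun x => ?_)
    ((integrable_indicator_iff hS).2 (integrableOn_const hμS))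
    (ae_of_all _ fun x => (hcont x).pow 2)
  by_cases hx : x ∈ S
  · rw [indicator_of_mem hx, norm_pow, Real.norm_eq_abs]
    exact pow_le_pow_left₀ (abs_nonneg _) (hC t ht x) 2
  · simp [indicator_of_notMem hx, h0 t x hx]

theorem hasDerivAt_integral_sq (hS : MeasurableSet S) (hμS : μ S ≠ ⊤) {F' : ℝ → α → ℝ}
    {U : Set ℝ} {C' t₀ : ℝ} (hU : U ∈ 𝓝 t₀) (hF : ∀ t ∈ U, AEStronglyMeasurable (F t) μ)
    (hF' : AEStronglyMeasurable (F' t₀) μ) (hC : ∀ t ∈ U, ∀ x, |F t x| ≤ C)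
    (hC' : ∀ t ∈ U, ∀ x ∈ S, |F' t x| ≤ C') (h0 : ∀ t, ∀ x ∉ S, F t x = 0)
    (hderiv : ∀ t ∈ U, ∀ x, HasDerivAt (F · x) (F' t x) t) :
    HasDerivAt (fun t => ∫ x, F t x ^ 2 ∂μ) (∫ x, 2 * F t₀ x * F' t₀ x ∂μ) t₀ := by
  refine (hasDerivAt_integral_of_dominated_loc_of_deriv_le
    (bound := S.indicator fun _ => 2 * C * C') (F' := fun t x => 2 * F t x * F' t x) hU
    (eventually_of_mem hU fun t ht => (hF t ht).pow 2) ?_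
    (((hF t₀ (mem_of_mem_nhds hU)).const_mul 2).mul hF')
    (ae_of_all _ fun x t ht => ?_) ((integrable_indicator_iff hS).2 (integrableOn_const hμS))
    (ae_of_all _ fun x t ht => ?_)).2
  · refine integrable_of_abs_le_of_notMem_eq_zero hμS ((hF t₀ (mem_of_mem_nhds hU)).pow 2)
      (C := C ^ 2) (fun x => ?_) fun x hx => by simp [h0 t₀ x hx]
    rw [Pi.pow_apply, abs_pow]
    exact pow_le_pow_left₀ (abs_nonneg _) (hC t₀ (mem_of_mem_nhds hU) x) 2
  · by_cases hx : x ∈ S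
    · rw [indicator_of_mem hx]
      simp only [norm_mul, Real.norm_eq_abs, abs_two]
      have hC0 : 0 ≤ C := (abs_nonneg _).trans (hC t ht x)
      gcongr
      exacts [hC t ht x, hC' t ht x hx]
    · simp [indicator_of_notMem hx, h0 t x hx]
  · simpa [mul_comm, mul_assoc] using (hderiv t ht x).fun_pow 2

end Integrals

theorem le_exp_mul_of_hasDerivAt_le {E E' : ℝ → ℝ} {c T t : ℝ} (hcont : ContinuousOn E (Icc 0 T))
    (hderiv : ∀ x ∈ Ioo 0 T, HasDerivAt E (E' x) x) (hle : ∀ x ∈ Ioo 0 T, E' x ≤ -c * E x)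
    (ht : t ∈ Icc 0 T) : E t ≤ exp (-c * t) * E 0 := by
  have hanti : AntitoneOn (fun x => exp (c * x) * E x) (Icc 0 T) := by
    refine antitoneOn_of_hasDerivWithinAt_nonpos
      (f' := fun x => exp (c * x) * c * E x + exp (c * x) * E' x) (convex_Icc 0 T) (by fun_prop)
      (fun x hx => ?_) (fun x hx => ?_)
    all_goals rw [interior_Icc] at hx
    · have hexp : HasDerivAt (fun x => exp (c * x)) (exp (c * x) * c) x := by
        simpa using ((hasDerivAt_id x).const_mul c).exp
      exact (hexp.mul (hderiv x hx)).hasDerivWithinAt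
    · nlinarith [mul_le_mul_of_nonneg_left (hle x hx) (exp_pos (c * x)).le]
  have := hanti (left_mem_Icc.2 (ht.1.trans ht.2)) ht ht.1
  simp only [mul_zero, exp_zero, one_mul] at this
  rw [neg_mul, exp_neg, ← div_eq_inv_mul, le_div_iff₀ (exp_pos _), mul_comm]
  exact this

theorem integral_mul_lineDeriv_self_eq_zero {E : Type*} [NormedAddCommGroup E] [NormedSpace ℝ E]
    [FiniteDimensional ℝ E] [MeasurableSpace E] [BorelSpace E] {μ : Measure E} [μ.IsAddHaarMeasure]
    {f f' : E → ℝ} {v : E} (hf : Continuous f) (hf' : Continuous f') (hsupp : HasCompactSupport f)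
    (hd : ∀ x, HasLineDerivAt ℝ f (f' x) x v) : ∫ x, f x * f' x ∂μ = 0 := by
  have h := integral_bilinear_hasLineDerivAt_right_eq_neg_left_of_integrable
    (B := ContinuousLinearMap.mul ℝ ℝ) (μ := μ)
    ((hf'.mul hf).integrable_of_hasCompactSupport hsupp.mul_left)
    ((hf.mul hf').integrable_of_hasCompactSupport hsupp.mul_right)
    ((hf.mul hf).integrable_of_hasCompactSupport hsupp.mul_right)
    (fun x _ => hd x) (fun x _ => hd x)
  simp only [ContinuousLinearMap.mul_apply', mul_comm (f' _)] at h
  linarith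

instance : IsFiniteMeasure sphMeasure := by unfold sphMeasure; infer_instance

theorem inner_mem_Icc_of_sph (s s' : Sph) : ⟪(s : E3), (s' : E3)⟫ ∈ Icc (-1 : ℝ) 1 := by
  rw [mem_Icc, ← abs_le]
  simpa using abs_real_inner_le_norm (s : E3) (s' : E3)

theorem Measurable.kernel_inner {k : E3 → ℝ → ℝ} (hk : Measurable (uncurry k)) {β : Type*}
    [MeasurableSpace β] {r : β → E3} {s s' : β → Sph} (hr : Measurable r) (hs : Measurable s)
    (hs' : Measurable s') : Measurable fun b => k (r b) ⟪(s b : E3), (s' b : E3)⟫ :=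
  hk.comp (hr.prodMk ((measurable_subtype_coe.comp hs).inner (measurable_subtype_coe.comp hs')))

noncomputable def scattering (k : E3 → ℝ → ℝ) (ψ : E3 → Sph → ℝ) (r : E3) (s : Sph) : ℝ :=
  ∫ s' : Sph, k r ⟪(s : E3), (s' : E3)⟫ * ψ r s' ∂sphMeasure

section Scattering

variable {k : E3 → ℝ → ℝ} {kbar : ℝ}

theorem integrable_kernel_mul (hk_meas : Measurable (uncurry k))
    (hk : ∀ r : E3, ∀ μ ∈ Icc (-1 : ℝ) 1, 0 ≤ k r μ ∧ k r μ ≤ kbar) {g : Sph → ℝ}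
    (hg : Continuous g) (r : E3) (s : Sph) :
    Integrable (fun s' : Sph => k r ⟪(s : E3), (s' : E3)⟫ * g s') sphMeasure :=
  (hg.integrable_of_hasCompactSupport (HasCompactSupport.of_compactSpace g)).bdd_mul
    (hk_meas.kernel_inner measurable_const measurable_const measurable_id).aestronglyMeasurable
    (ae_of_all _ fun s' => by
      obtain ⟨h0, hle⟩ := hk r _ (inner_mem_Icc_of_sph s s')
      rwa [Real.norm_eq_abs, abs_of_nonneg h0])

theorem scattering_sub (hk_meas : Measurable (uncurry k))
    (hk : ∀ r : E3, ∀ μ ∈ Icc (-1 : ℝ) 1, 0 ≤ k r μ ∧ k r μ ≤ kbar) {ψ₁ ψ₂ : E3 → Sph → ℝ}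
    {r : E3} (h₁ : Continuous (ψ₁ r)) (h₂ : Continuous (ψ₂ r)) (s : Sph) :
    scattering k (fun r s => ψ₁ r s - ψ₂ r s) r s = scattering k ψ₁ r s - scattering k ψ₂ r s := by
  simp only [scattering, mul_sub]
  exact integral_sub (integrable_kernel_mul hk_meas hk h₁ r s)
    (integrable_kernel_mul hk_meas hk h₂ r s)

theorem abs_scattering_le (hk : ∀ r : E3, ∀ μ ∈ Icc (-1 : ℝ) 1, 0 ≤ k r μ ∧ k r μ ≤ kbar)
    {ψ : E3 → Sph → ℝ} {r : E3} {C : ℝ} (hC : ∀ s, |ψ r s| ≤ C) (s : Sph) :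
    |scattering k ψ r s| ≤ kbar * C * sphMeasure.real univ := by
  rw [scattering, ← Real.norm_eq_abs]
  refine norm_integral_le_of_norm_le_const (ae_of_all _ fun s' => ?_)
  obtain ⟨h0, hle⟩ := hk r _ (inner_mem_Icc_of_sph s s')
  rw [norm_mul, Real.norm_eq_abs, abs_of_nonneg h0]
  exact mul_le_mul hle (hC s') (abs_nonneg _) (h0.trans hle)

theorem stronglyMeasurable_scattering (hk_meas : Measurable (uncurry k)) {ψ : E3 → Sph → ℝ}
    (hψ : Measurable (uncurry ψ)) : StronglyMeasurable (uncurry (scattering k ψ)) :=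
  ((hk_meas.kernel_inner (measurable_fst.comp measurable_fst) (measurable_snd.comp measurable_fst)
    measurable_snd).mul (hψ.comp ((measurable_fst.comp measurable_fst).prodMk measurable_snd))
    ).stronglyMeasurable.integral_prod_right'

theorem sigmaS_mem_Icc (hk : ∀ r : E3, ∀ μ ∈ Icc (-1 : ℝ) 1, 0 ≤ k r μ ∧ k r μ ≤ kbar)
    {σs : E3 → ℝ}
    (hσs : ∀ (r : E3) (s : Sph), σs r = ∫ s' : Sph, k r ⟪(s : E3), (s' : E3)⟫ ∂sphMeasure)
    (r : E3) (s : Sph) : σs r ∈ Icc 0 (kbar * sphMeasure.real univ) := by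
  rw [hσs r s]
  refine ⟨integral_nonneg fun s' => (hk r _ (inner_mem_Icc_of_sph s s')).1,
    (le_abs_self _).trans ?_⟩
  rw [← Real.norm_eq_abs]
  refine norm_integral_le_of_norm_le_const (ae_of_all _ fun s' => ?_)
  obtain ⟨h0, hle⟩ := hk r _ (inner_mem_Icc_of_sph s s')
  rwa [Real.norm_eq_abs, abs_of_nonneg h0]

theorem integral_mul_scattering_le (hk_meas : Measurable (uncurry k))
    (hk : ∀ r : E3, ∀ μ ∈ Icc (-1 : ℝ) 1, 0 ≤ k r μ ∧ k r μ ≤ kbar) {σs : E3 → ℝ}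
    (hσs : ∀ (r : E3) (s : Sph), σs r = ∫ s' : Sph, k r ⟪(s : E3), (s' : E3)⟫ ∂sphMeasure)
    {ψ : E3 → Sph → ℝ} {r : E3} (hψ : Continuous (ψ r)) :
    ∫ s, ψ r s * scattering k ψ r s ∂sphMeasure ≤ σs r * ∫ s, ψ r s ^ 2 ∂sphMeasure := by
  obtain ⟨D, hD⟩ := hψ.bounded_above_of_compact_support (HasCompactSupport.of_compactSpace _)
  exact integral_mul_integral_kernel_le (w := fun (s s' : Sph) => k r ⟪(s : E3), (s' : E3)⟫)
    (hk_meas.kernel_inner measurable_const measurable_fst measurable_snd)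
    (fun s s' => (hk r _ (inner_mem_Icc_of_sph s s')).1)
    (fun s s' => (hk r _ (inner_mem_Icc_of_sph s s')).2)
    (fun s s' => by rw [real_inner_comm]) (fun s => (hσs r s).symm) hψ.measurable hD

end Scattering

local notation "μP" => Measure.prod (volume : Measure E3) sphMeasure

theorem hasCompactSupport_of_forall_notMem {K : Set E3} (hK : IsCompact K) {f : E3 × Sph → ℝ}
    (h0 : ∀ p : E3 × Sph, p.1 ∉ K → f p = 0) : HasCompactSupport f :=
  HasCompactSupport.intro (hK.prod isCompact_univ) fun p hp => h0 p fun h => hp ⟨h, trivial⟩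

section Transport

variable {K : Set E3} {ψ : E3 → Sph → ℝ} {ψr : E3 → Sph → E3}

theorem integrable_mul_inner (hK : IsCompact K) (hψ : Continuous (uncurry ψ))
    (hψr : Continuous (uncurry ψr)) (hsupp : ∀ r s, r ∉ K → ψ r s = 0) :
    Integrable (fun p : E3 × Sph => ψ p.1 p.2 * ⟪(p.2 : E3), ψr p.1 p.2⟫) μP :=
  (hψ.mul ((continuous_subtype_val.comp continuous_snd).inner hψr)).integrable_of_hasCompactSupport
    (hasCompactSupport_of_forall_notMem hK fun p hp => by simp [uncurry, hsupp _ _ hp])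

theorem integral_mul_inner_gradient_eq_zero (hK : IsCompact K) (hψ : Continuous (uncurry ψ))
    (hψr : Continuous (uncurry ψr)) (hsupp : ∀ r s, r ∉ K → ψ r s = 0)
    (hgrad : ∀ r s, HasGradientAt (ψ · s) (ψr r s) r) :
    ∫ p : E3 × Sph, ψ p.1 p.2 * ⟪(p.2 : E3), ψr p.1 p.2⟫ ∂μP = 0 := by
  rw [integral_prod_symm _ (integrable_mul_inner hK hψ hψr hsupp)]
  refine integral_eq_zero_of_ae (ae_of_all _ fun s => ?_)
  show ∫ r, ψ r s * ⟪(s : E3), ψr r s⟫ = 0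
  refine integral_mul_lineDeriv_self_eq_zero (v := (s : E3))
    (hψ.comp (continuous_id.prodMk continuous_const))
    (continuous_const.inner (hψr.comp (continuous_id.prodMk continuous_const)))
    (HasCompactSupport.intro hK fun r hr => hsupp r s hr) fun r => ?_
  simpa [real_inner_comm] using (hgrad r s).hasFDerivAt.hasLineDerivAt (s : E3)

theorem le_integral_mul_transport (hK : IsCompact K) {k : E3 → ℝ → ℝ} {σt σs : E3 → ℝ}
    {kbar σalo Cσ : ℝ} (hk_meas : Measurable (uncurry k))
    (hk : ∀ r : E3, ∀ μ ∈ Icc (-1 : ℝ) 1, 0 ≤ k r μ ∧ k r μ ≤ kbar)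
    (hσs : ∀ (r : E3) (s : Sph), σs r = ∫ s' : Sph, k r ⟪(s : E3), (s' : E3)⟫ ∂sphMeasure)
    (hσt_meas : Measurable σt) (hσt : ∀ r, |σt r| ≤ Cσ) (hσa : ∀ r, σalo ≤ σt r - σs r)
    (hψ : Continuous (uncurry ψ)) (hψr : Continuous (uncurry ψr))
    (hsupp : ∀ r s, r ∉ K → ψ r s = 0) (hgrad : ∀ r s, HasGradientAt (ψ · s) (ψr r s) r) :
    σalo * ∫ p : E3 × Sph, ψ p.1 p.2 ^ 2 ∂μP ≤
      ∫ p : E3 × Sph, ψ p.1 p.2 *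
        (⟪(p.2 : E3), ψr p.1 p.2⟫ + σt p.1 * ψ p.1 p.2 - scattering k ψ p.1 p.2) ∂μP := by
  have hcs : HasCompactSupport (uncurry ψ) :=
    hasCompactSupport_of_forall_notMem hK fun p hp => hsupp _ _ hp
  obtain ⟨C, hC⟩ := hψ.bounded_above_of_compact_support hcs
  have hKψ_sm := stronglyMeasurable_scattering (k := k) hk_meas hψ.measurable
  have hKψ_le (r : E3) (s : Sph) : ‖scattering k ψ r s‖ ≤ kbar * C * sphMeasure.real univ :=
    abs_scattering_le hk (fun s => hC (r, s)) s
  have hψ_int : Integrable (uncurry ψ) μP := hψ.integrable_of_hasCompactSupport hcs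
  have hsq_int : Integrable (fun p : E3 × Sph => ψ p.1 p.2 ^ 2) μP :=
    (hψ.pow 2).integrable_of_hasCompactSupport (hcs.comp_left (zero_pow two_ne_zero))
  have hloss_int : Integrable (fun p : E3 × Sph => σt p.1 * ψ p.1 p.2 ^ 2) μP :=
    hsq_int.bdd_mul (hσt_meas.comp measurable_fst).aestronglyMeasurable
      (ae_of_all _ fun p => hσt p.1)
  have hgain_int : Integrable (fun p : E3 × Sph => scattering k ψ p.1 p.2 * ψ p.1 p.2) μP :=
    hψ_int.bdd_mul hKψ_sm.aestronglyMeasurable (ae_of_all _ fun p => hKψ_le p.1 p.2)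
  have hslice (r : E3) :
      0 ≤ ∫ s, (σt r * ψ r s ^ 2 - σalo * ψ r s ^ 2 - scattering k ψ r s * ψ r s)
        ∂sphMeasure := by
    have hψr_cont : Continuous (ψ r) := hψ.comp (continuous_const.prodMk continuous_id)
    have hsq : Integrable (fun s => ψ r s ^ 2) sphMeasure :=
      (hψr_cont.pow 2).integrable_of_hasCompactSupport (HasCompactSupport.of_compactSpace _)
    have hgain : Integrable (fun s => scattering k ψ r s * ψ r s) sphMeasure :=
      (hψr_cont.integrable_of_hasCompactSupport (HasCompactSupport.of_compactSpace _)).bdd_mul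
        (hKψ_sm.comp_measurable (measurable_const.prodMk measurable_id)).aestronglyMeasurable
        (ae_of_all _ fun s => hKψ_le r s)
    have hdiff : Integrable (fun s => σt r * ψ r s ^ 2 - σalo * ψ r s ^ 2) sphMeasure :=
      (hsq.const_mul _).sub (hsq.const_mul _)
    rw [integral_sub hdiff hgain, integral_sub (hsq.const_mul _) (hsq.const_mul _),
      integral_const_mul, integral_const_mul]
    have hgain_le := integral_mul_scattering_le hk_meas hk hσs hψr_cont
    simp_rw [mul_comm (scattering k ψ r _)]
    have hsq0 : 0 ≤ ∫ s, ψ r s ^ 2 ∂sphMeasure := integral_nonneg fun s => sq_nonneg (ψ r s)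
    nlinarith [hσa r]
  have hdiff_int : Integrable
      (fun p : E3 × Sph => σt p.1 * ψ p.1 p.2 ^ 2 - σalo * ψ p.1 p.2 ^ 2) μP :=
    hloss_int.sub (hsq_int.const_mul σalo)
  have hcoll : 0 ≤ ∫ p : E3 × Sph, (σt p.1 * ψ p.1 p.2 ^ 2 - σalo * ψ p.1 p.2 ^ 2 -
      scattering k ψ p.1 p.2 * ψ p.1 p.2) ∂μP := by
    rw [integral_prod _ ?_]
    · exact integral_nonneg hslice
    exact hdiff_int.sub hgain_int
  have htransport := integral_mul_inner_gradient_eq_zero hK hψ hψr hsupp hgrad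
  have htr_int := integrable_mul_inner hK hψ hψr hsupp
  rw [integral_sub hdiff_int hgain_int,
    integral_sub hloss_int (hsq_int.const_mul σalo), integral_const_mul] at hcoll
  calc σalo * ∫ p : E3 × Sph, ψ p.1 p.2 ^ 2 ∂μP
      ≤ (∫ p : E3 × Sph, ψ p.1 p.2 * ⟪(p.2 : E3), ψr p.1 p.2⟫ ∂μP) +
        (∫ p : E3 × Sph, σt p.1 * ψ p.1 p.2 ^ 2 ∂μP) -
        ∫ p : E3 × Sph, scattering k ψ p.1 p.2 * ψ p.1 p.2 ∂μP := by linarith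
    _ = _ := by
      rw [← integral_add htr_int hloss_int, ← integral_sub ?_ hgain_int]
      · congr with p
        ring
      exact htr_int.add hloss_int

end Transport

section Evolution

variable {X : Type*} [TopologicalSpace X] {T : ℝ} {F : ℝ → E3 → Sph → X}

theorem continuous_uncurry_of_continuousOn
    (hF : ContinuousOn (fun p : ℝ × E3 × Sph => F p.1 p.2.1 p.2.2) (Icc 0 T ×ˢ univ)) {t : ℝ}
    (ht : t ∈ Icc 0 T) : Continuous (uncurry (F t)) :=
  hF.comp_continuous (continuous_const.prodMk continuous_id) fun _ => ⟨ht, trivial⟩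

theorem continuousOn_of_continuousOn_prod
    (hF : ContinuousOn (fun p : ℝ × E3 × Sph => F p.1 p.2.1 p.2.2) (Icc 0 T ×ˢ univ))
    (r : E3) (s : Sph) : ContinuousOn (F · r s) (Icc 0 T) :=
  hF.comp (continuous_id.prodMk (continuous_const (y := (r, s)))).continuousOn
    fun _ ht => ⟨ht, trivial⟩

theorem exists_abs_le_of_continuousOn {K : Set E3} (hK : IsCompact K) {F : ℝ → E3 → Sph → ℝ}
    (hF : ContinuousOn (fun p : ℝ × E3 × Sph => F p.1 p.2.1 p.2.2) (Icc 0 T ×ˢ univ)) :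
    ∃ C, ∀ t ∈ Icc 0 T, ∀ r ∈ K, ∀ s, |F t r s| ≤ C := by
  obtain ⟨C, hC⟩ := (isCompact_Icc.prod (hK.prod isCompact_univ)).exists_bound_of_continuousOn
    (hF.mono fun p hp => ⟨hp.1, trivial⟩)
  exact ⟨C, fun t ht r hr s => hC (t, r, s) ⟨ht, hr, trivial⟩⟩

end Evolution

theorem integral_sq_le_exp_of_homogeneous {K : Set E3} (hK : IsCompact K) {k : E3 → ℝ → ℝ}
    {σt σs : E3 → ℝ} {kbar σalo Cσ T : ℝ} (hk_meas : Measurable (uncurry k))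
    (hk : ∀ r : E3, ∀ μ ∈ Icc (-1 : ℝ) 1, 0 ≤ k r μ ∧ k r μ ≤ kbar)
    (hσs : ∀ (r : E3) (s : Sph), σs r = ∫ s' : Sph, k r ⟪(s : E3), (s' : E3)⟫ ∂sphMeasure)
    (hσt_meas : Measurable σt) (hσt : ∀ r, |σt r| ≤ Cσ) (hσa : ∀ r, σalo ≤ σt r - σs r)
    {ψ ψt : ℝ → E3 → Sph → ℝ} {ψr : ℝ → E3 → Sph → E3}
    (hψ_cont : ContinuousOn (fun p : ℝ × E3 × Sph => ψ p.1 p.2.1 p.2.2) (Icc 0 T ×ˢ univ))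
    (hψt_cont : ContinuousOn (fun p : ℝ × E3 × Sph => ψt p.1 p.2.1 p.2.2) (Icc 0 T ×ˢ univ))
    (hψr_cont : ContinuousOn (fun p : ℝ × E3 × Sph => ψr p.1 p.2.1 p.2.2) (Icc 0 T ×ˢ univ))
    (hsupp : ∀ t r s, r ∉ K → ψ t r s = 0)
    (hψt : ∀ r s, ∀ t ∈ Icc 0 T, HasDerivWithinAt (ψ · r s) (ψt t r s) (Icc 0 T) t)
    (hψr : ∀ t ∈ Icc 0 T, ∀ r s, HasGradientAt (ψ t · s) (ψr t r s) r)
    (heq : ∀ t ∈ Icc 0 T, ∀ r s,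
      ψt t r s + ⟪(s : E3), ψr t r s⟫ + σt r * ψ t r s = scattering k (ψ t) r s)
    {t : ℝ} (ht : t ∈ Icc 0 T) :
    ∫ p : E3 × Sph, ψ t p.1 p.2 ^ 2 ∂μP ≤
      exp (-(2 * σalo) * t) * ∫ p : E3 × Sph, ψ 0 p.1 p.2 ^ 2 ∂μP := by
  have hslice (t : ℝ) (ht : t ∈ Icc 0 T) : Continuous (uncurry (ψ t)) :=
    continuous_uncurry_of_continuousOn hψ_cont ht
  obtain ⟨C, hC⟩ := exists_abs_le_of_continuousOn hK hψ_cont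
  obtain ⟨C', hC'⟩ := exists_abs_le_of_continuousOn hK hψt_cont
  have hS : MeasurableSet (K ×ˢ univ : Set (E3 × Sph)) := hK.isClosed.measurableSet.prod .univ
  have hμS : μP (K ×ˢ univ) ≠ ⊤ := (hK.prod isCompact_univ).measure_lt_top.ne
  have h0 (t : ℝ) : ∀ p ∉ K ×ˢ univ, ψ t p.1 p.2 = 0 := fun p hp =>
    hsupp t _ _ fun h => hp ⟨h, trivial⟩
  have hCψ : ∀ t ∈ Icc 0 T, ∀ p : E3 × Sph, |ψ t p.1 p.2| ≤ max C 0 := by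
    intro t ht p
    by_cases hp : p ∈ K ×ˢ univ
    · exact (hC t ht p.1 hp.1 p.2).trans (le_max_left _ _)
    · simp [h0 t p hp]
  refine le_exp_mul_of_hasDerivAt_le (E := fun x => ∫ p : E3 × Sph, ψ x p.1 p.2 ^ 2 ∂μP)
    (E' := fun x => ∫ p : E3 × Sph, 2 * ψ x p.1 p.2 * ψt x p.1 p.2 ∂μP) ?_ (fun x hx => ?_)
    (fun x hx => ?_) ht
  · exact continuousOn_integral_sq hS hμS (fun t ht => (hslice t ht).aestronglyMeasurable) hCψ
      h0 fun p => continuousOn_of_continuousOn_prod hψ_cont p.1 p.2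
  · have hx' := Ioo_subset_Icc_self hx
    exact hasDerivAt_integral_sq hS hμS (Ioo_mem_nhds hx.1 hx.2)
      (fun t ht => (hslice t (Ioo_subset_Icc_self ht)).aestronglyMeasurable)
      (continuous_uncurry_of_continuousOn hψt_cont hx').aestronglyMeasurable
      (fun t ht => hCψ t (Ioo_subset_Icc_self ht))
      (fun t ht p hp => hC' t (Ioo_subset_Icc_self ht) p.1 hp.1 p.2) h0
      fun t ht p => (hψt p.1 p.2 t (Ioo_subset_Icc_self ht)).hasDerivAt (Icc_mem_nhds ht.1 ht.2)
  · have hx' := Ioo_subset_Icc_self hx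
    have hcoer := le_integral_mul_transport hK hk_meas hk hσs hσt_meas hσt hσa (hslice x hx')
      (continuous_uncurry_of_continuousOn hψr_cont hx') (hsupp x) (hψr x hx')
    have hψt_eq (p : E3 × Sph) : 2 * ψ x p.1 p.2 * ψt x p.1 p.2 = -2 * (ψ x p.1 p.2 *
        (⟪(p.2 : E3), ψr x p.1 p.2⟫ + σt p.1 * ψ x p.1 p.2 - scattering k (ψ x) p.1 p.2)) := by
      rw [← heq x hx' p.1 p.2]
      ring
    simp only [hψt_eq, integral_const_mul]
    linarith

theorem stmt_9_general
    (k : E3 → ℝ → ℝ) (σt : E3 → ℝ)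
    (hk_meas : Measurable (Function.uncurry k)) (hσt_meas : Measurable σt)
    (σs σa : E3 → ℝ)
    (hσs : ∀ (r : E3) (s : Sph), σs r = ∫ s' : Sph, k r ⟪(s : E3), (s' : E3)⟫ ∂sphMeasure)
    (hσa : ∀ r : E3, σa r = σt r - σs r)
    (kbar σalo σahi : ℝ)
    (hk : ∀ r : E3, ∀ μ ∈ Set.Icc (-1 : ℝ) 1, 0 ≤ k r μ ∧ k r μ ≤ kbar)
    (hσa0 : 0 < σalo) (hσab : ∀ r : E3, σalo ≤ σa r ∧ σa r ≤ σahi)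
    (T : ℝ) (K : Set E3) (hK : IsCompact K)
    (qhat : E3 → Sph → ℝ)
    (φhat : E3 → Sph → ℝ) (φhatr : E3 → Sph → E3)
    (hφhat_cont : Continuous (fun p : E3 × Sph => φhat p.1 p.2))
    (hφhatr_cont : Continuous (fun p : E3 × Sph => φhatr p.1 p.2))
    (hφhat_supp : ∀ (r : E3) (s : Sph), r ∉ K → φhat r s = 0)
    (hφhatr : ∀ (r : E3) (s : Sph), HasGradientAt (fun r' => φhat r' s) (φhatr r s) r)
    (heqhat : ∀ (r : E3) (s : Sph),
      ⟪(s : E3), φhatr r s⟫ + σt r * φhat r s =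
        (∫ s' : Sph, k r ⟪(s : E3), (s' : E3)⟫ * φhat r s' ∂sphMeasure) + qhat r s)
    (φ φt : ℝ → E3 → Sph → ℝ) (φr : ℝ → E3 → Sph → E3)
    (hφ_cont : ContinuousOn (fun p : ℝ × E3 × Sph => φ p.1 p.2.1 p.2.2)
      (Set.Icc 0 T ×ˢ Set.univ))
    (hφt_cont : ContinuousOn (fun p : ℝ × E3 × Sph => φt p.1 p.2.1 p.2.2)
      (Set.Icc 0 T ×ˢ Set.univ))
    (hφr_cont : ContinuousOn (fun p : ℝ × E3 × Sph => φr p.1 p.2.1 p.2.2)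
      (Set.Icc 0 T ×ˢ Set.univ))
    (hφ_supp : ∀ (t : ℝ) (r : E3) (s : Sph), r ∉ K → φ t r s = 0)
    (hφt : ∀ (r : E3) (s : Sph), ∀ t ∈ Set.Icc 0 T,
      HasDerivWithinAt (fun t' => φ t' r s) (φt t r s) (Set.Icc 0 T) t)
    (hφr : ∀ t ∈ Set.Icc 0 T, ∀ (r : E3) (s : Sph),
      HasGradientAt (fun r' => φ t r' s) (φr t r s) r)
    (heq : ∀ t ∈ Set.Icc 0 T, ∀ (r : E3) (s : Sph),
      φt t r s + ⟪(s : E3), φr t r s⟫ + σt r * φ t r s =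
        (∫ s' : Sph, k r ⟪(s : E3), (s' : E3)⟫ * φ t r s' ∂sphMeasure) + qhat r s) :
    ∀ t ∈ Set.Icc 0 T,
      (∫ p : E3 × Sph, (φ t p.1 p.2 - φhat p.1 p.2) ^ 2
          ∂((volume : Measure E3).prod sphMeasure)) ≤
        Real.exp (-σalo * t) *
          ∫ p : E3 × Sph, (φ 0 p.1 p.2 - φhat p.1 p.2) ^ 2
            ∂((volume : Measure E3).prod sphMeasure) := by
  intro t ht
  obtain ⟨s₀⟩ : Nonempty Sph := ⟨⟨EuclideanSpace.single 0 1, by simp⟩⟩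
  have hσt (r : E3) : |σt r| ≤ σahi + kbar * sphMeasure.real univ := by
    have hσs_r := sigmaS_mem_Icc hk hσs r s₀
    rw [abs_le]
    constructor <;> linarith [hσab r, hσa r, hσs_r.1, hσs_r.2]
  have hφ_slice (t : ℝ) (ht : t ∈ Icc 0 T) (r : E3) : Continuous (φ t r) :=
    (continuous_uncurry_of_continuousOn hφ_cont ht).comp (continuous_const.prodMk continuous_id)
  have hφhat_slice (r : E3) : Continuous (φhat r) :=
    hφhat_cont.comp (continuous_const.prodMk continuous_id)
  have hdecay := integral_sq_le_exp_of_homogeneous hK hk_meas hk hσs hσt_meas hσt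
    (fun r => hσa r ▸ (hσab r).1) (ψ := fun t r s => φ t r s - φhat r s)
    (ψr := fun t r s => φr t r s - φhatr r s)
    (hφ_cont.sub (hφhat_cont.comp continuous_snd).continuousOn) hφt_cont
    (hφr_cont.sub (hφhatr_cont.comp continuous_snd).continuousOn)
    (fun t r s hr => by simp [hφ_supp t r s hr, hφhat_supp r s hr])
    (fun r s t ht => (hφt r s t ht).sub_const _)
    (fun t ht r s => by
      simpa using ((hφr t ht r s).hasFDerivAt.fun_sub (hφhatr r s).hasFDerivAt).hasGradientAt)
    (fun t ht r s => by
      rw [scattering_sub hk_meas hk (hφ_slice t ht r) (hφhat_slice r), scattering, scattering,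
        inner_sub_right]
      linarith [heq t ht r s, heqhat r s])
    ht
  refine hdecay.trans (mul_le_mul_of_nonneg_right (exp_le_exp.2 ?_)
    (integral_nonneg fun p => sq_nonneg _))
  nlinarith [ht.1]

/-- Exponential stability (decay to equilibrium) for the time-dependent radiative
transfer equation with time-independent source q̂: the L²-distance of the solution φ
to the steady state φ̂ decays exponentially with rate σ̲ₐ. -/
theorem stmt_9
    (k : E3 → ℝ → ℝ) (σt : E3 → ℝ)
    (hk_meas : Measurable (Function.uncurry k)) (hσt_meas : Measurable σt)
    (σs σa : E3 → ℝ)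
    (hσs : ∀ (r : E3) (s : Sph), σs r = ∫ s' : Sph, k r ⟪(s : E3), (s' : E3)⟫ ∂sphMeasure)
    (hσa : ∀ r : E3, σa r = σt r - σs r)
    (kbar σalo σahi : ℝ) (hkbar : 0 ≤ kbar)
    (hk : ∀ r : E3, ∀ μ ∈ Set.Icc (-1 : ℝ) 1, 0 ≤ k r μ ∧ k r μ ≤ kbar)
    (hσa0 : 0 < σalo) (hσaa : σalo ≤ σahi) (hσab : ∀ r : E3, σalo ≤ σa r ∧ σa r ≤ σahi)
    (T : ℝ) (K : Set E3) (hK : IsCompact K)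
    (qhat : E3 → Sph → ℝ)
    (hq_cont : Continuous (fun p : E3 × Sph => qhat p.1 p.2))
    (hq_supp : ∀ (r : E3) (s : Sph), r ∉ K → qhat r s = 0)
    (φhat : E3 → Sph → ℝ) (φhatr : E3 → Sph → E3)
    (hφhat_cont : Continuous (fun p : E3 × Sph => φhat p.1 p.2))
    (hφhatr_cont : Continuous (fun p : E3 × Sph => φhatr p.1 p.2))
    (hφhat_supp : ∀ (r : E3) (s : Sph), r ∉ K → φhat r s = 0)
    (hφhatr : ∀ (r : E3) (s : Sph), HasGradientAt (fun r' => φhat r' s) (φhatr r s) r)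
    (heqhat : ∀ (r : E3) (s : Sph),
      ⟪(s : E3), φhatr r s⟫ + σt r * φhat r s =
        (∫ s' : Sph, k r ⟪(s : E3), (s' : E3)⟫ * φhat r s' ∂sphMeasure) + qhat r s)
    (φ φt : ℝ → E3 → Sph → ℝ) (φr : ℝ → E3 → Sph → E3)
    (hφ_cont : ContinuousOn (fun p : ℝ × E3 × Sph => φ p.1 p.2.1 p.2.2)
      (Set.Icc 0 T ×ˢ Set.univ))
    (hφt_cont : ContinuousOn (fun p : ℝ × E3 × Sph => φt p.1 p.2.1 p.2.2)
      (Set.Icc 0 T ×ˢ Set.univ))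
    (hφr_cont : ContinuousOn (fun p : ℝ × E3 × Sph => φr p.1 p.2.1 p.2.2)
      (Set.Icc 0 T ×ˢ Set.univ))
    (hφ_supp : ∀ (t : ℝ) (r : E3) (s : Sph), r ∉ K → φ t r s = 0)
    (hφt : ∀ (r : E3) (s : Sph), ∀ t ∈ Set.Icc 0 T,
      HasDerivWithinAt (fun t' => φ t' r s) (φt t r s) (Set.Icc 0 T) t)
    (hφr : ∀ t ∈ Set.Icc 0 T, ∀ (r : E3) (s : Sph),
      HasGradientAt (fun r' => φ t r' s) (φr t r s) r)
    (heq : ∀ t ∈ Set.Icc 0 T, ∀ (r : E3) (s : Sph),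
      φt t r s + ⟪(s : E3), φr t r s⟫ + σt r * φ t r s =
        (∫ s' : Sph, k r ⟪(s : E3), (s' : E3)⟫ * φ t r s' ∂sphMeasure) + qhat r s) :
    ∀ t ∈ Set.Icc 0 T,
      (∫ p : E3 × Sph, (φ t p.1 p.2 - φhat p.1 p.2) ^ 2
          ∂((volume : Measure E3).prod sphMeasure)) ≤
        Real.exp (-σalo * t) *
          ∫ p : E3 × Sph, (φ 0 p.1 p.2 - φhat p.1 p.2) ^ 2
            ∂((volume : Measure E3).prod sphMeasure) :=
  stmt_9_general k σt hk_meas hσt_meas σs σa hσs hσa kbar σalo σahi hk hσa0 hσab T K hK qhat φhat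
    φhatr hφhat_cont hφhatr_cont hφhat_supp hφhatr heqhat φ φt φr hφ_cont hφt_cont hφr_cont hφ_supp
    hφt hφr heq
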